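/- For A ∈ ℝ^{m×n} with m = m₁m₂, n = n₁n₂: if σ₁ is the largest singular value of 𝓡(A) with corresponding unit left and right singular vectors u, v, then the matrices B, C defined by vec(B) = σ₁ u and vec(C) = v minimize ‖A − B ⊗ C‖_F over all B ∈ ℝ^{m₁×n₁}, C ∈ ℝ^{m₂×n₂}. -/

import Mathlib

open Matrix
open scoped Kronecker BigOperators

/-- The Frobenius norm of a real matrix. -/
noncomputable def frobNorm {α β : Type*} [Fintype α] [Fintype β]
    (M : Matrix α β ℝ) : ℝ :=
  Real.sqrt (∑ i, ∑ j, (M i j) ^ 2)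

/-- The Van Loan–Pitsianis rearrangement operator `𝓡`. -/
def rearrange {m₁ m₂ n₁ n₂ : ℕ}
    (A : Matrix (Fin m₁ × Fin m₂) (Fin n₁ × Fin n₂) ℝ) :
    Matrix (Fin m₁ × Fin n₁) (Fin m₂ × Fin n₂) ℝ :=
  fun p q => A (p.1, q.1) (p.2, q.2)

/-!
Under `𝓡`, the Kronecker product `B ⊗ C` becomes the outer product `vec B (vec C)ᵀ` while the
Frobenius norm is unchanged, so the problem is the best rank-one approximation of `R = 𝓡(A)`.
Expanding, `‖R - x yᵀ‖² = ‖R‖² - 2 xᵀ R y + ‖x‖²‖y‖²`; the bound `xᵀ R y ≤ σ₁ ‖x‖ ‖y‖` turns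
this into `‖R‖² - σ₁² + (‖x‖‖y‖ - σ₁)² ≥ ‖R‖² - σ₁²`, which is the value at `x = σ₁ u`, `y = v`.
-/

lemma rearrange_sub {m₁ m₂ n₁ n₂ : ℕ} (M N : Matrix (Fin m₁ × Fin m₂) (Fin n₁ × Fin n₂) ℝ) :
    rearrange (M - N) = rearrange M - rearrange N :=
  rfl

lemma rearrange_kronecker {m₁ m₂ n₁ n₂ : ℕ}
    (B : Matrix (Fin m₁) (Fin n₁) ℝ) (C : Matrix (Fin m₂) (Fin n₂) ℝ) :
    rearrange (B ⊗ₖ C) = vecMulVec (Function.uncurry B) (Function.uncurry C) :=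
  rfl

lemma frobNorm_rearrange {m₁ m₂ n₁ n₂ : ℕ}
    (M : Matrix (Fin m₁ × Fin m₂) (Fin n₁ × Fin n₂) ℝ) :
    frobNorm (rearrange M) = frobNorm M := by
  unfold frobNorm rearrange
  simp only [Fintype.sum_prod_type]
  exact congrArg Real.sqrt (Finset.sum_congr rfl fun _ _ => Finset.sum_comm)

lemma frobNorm_sub_kronecker {m₁ m₂ n₁ n₂ : ℕ}
    (A : Matrix (Fin m₁ × Fin m₂) (Fin n₁ × Fin n₂) ℝ)
    (B : Matrix (Fin m₁) (Fin n₁) ℝ) (C : Matrix (Fin m₂) (Fin n₂) ℝ) :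
    frobNorm (A - B ⊗ₖ C) =
      frobNorm (rearrange A - vecMulVec (Function.uncurry B) (Function.uncurry C)) := by
  rw [← rearrange_kronecker, ← rearrange_sub, frobNorm_rearrange]

lemma sum_sq_sub_vecMulVec {α β : Type*} [Fintype α] [Fintype β]
    (R : Matrix α β ℝ) (x : α → ℝ) (y : β → ℝ) :
    ∑ p, ∑ q, ((R - vecMulVec x y) p q) ^ 2 =
      ∑ p, ∑ q, (R p q) ^ 2 - 2 * (x ⬝ᵥ R *ᵥ y) + (∑ p, (x p) ^ 2) * (∑ q, (y q) ^ 2) := by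
  have hsq : ∀ p q, ((R - vecMulVec x y) p q) ^ 2
      = (R p q) ^ 2 - 2 * (x p * (R p q * y q)) + (x p) ^ 2 * (y q) ^ 2 := by
    intro p q
    simp only [Matrix.sub_apply, vecMulVec_apply]
    ring
  simp only [hsq, Finset.sum_add_distrib, Finset.sum_sub_distrib, Finset.sum_mul_sum,
    dotProduct, mulVec, ← Finset.mul_sum]

theorem frobNorm_sub_vecMulVec_le {α β : Type*} [Fintype α] [Fintype β]
    (R : Matrix α β ℝ) (σ : ℝ) (u : α → ℝ) (v : β → ℝ)
    (hu : ∑ p, (u p) ^ 2 = 1) (hv : ∑ q, (v q) ^ 2 = 1) (hright : R *ᵥ v = σ • u)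
    (hmax : ∀ x y, x ⬝ᵥ R *ᵥ y ≤ σ * Real.sqrt (∑ p, (x p) ^ 2) * Real.sqrt (∑ q, (y q) ^ 2))
    (x : α → ℝ) (y : β → ℝ) :
    frobNorm (R - vecMulVec (σ • u) v) ≤ frobNorm (R - vecMulVec x y) := by
  unfold frobNorm
  apply Real.sqrt_le_sqrt
  rw [sum_sq_sub_vecMulVec, sum_sq_sub_vecMulVec]
  have hσu : ∑ p, ((σ • u) p) ^ 2 = σ ^ 2 := by
    simp only [Pi.smul_apply, smul_eq_mul, mul_pow, ← Finset.mul_sum, hu, mul_one]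
  have hσuRv : (σ • u) ⬝ᵥ R *ᵥ v = σ ^ 2 := by
    simp only [hright, dotProduct, ← sq, hσu]
  have hxRy := hmax x y
  set a := Real.sqrt (∑ p, (x p) ^ 2)
  set b := Real.sqrt (∑ q, (y q) ^ 2)
  rw [hσu, hσuRv, hv, ← Real.sq_sqrt (Fintype.sum_nonneg fun p => sq_nonneg (x p)),
    ← Real.sq_sqrt (Fintype.sum_nonneg fun q => sq_nonneg (y q))]
  nlinarith [sq_nonneg (a * b - σ)]

theorem nearest_kronecker_product_general {m₁ m₂ n₁ n₂ : ℕ}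
    (A : Matrix (Fin m₁ × Fin m₂) (Fin n₁ × Fin n₂) ℝ)
    (σ₁ : ℝ) (u : Fin m₁ × Fin n₁ → ℝ) (v : Fin m₂ × Fin n₂ → ℝ)
    (hu : ∑ p, (u p) ^ 2 = 1) (hv : ∑ q, (v q) ^ 2 = 1)
    (hright : (rearrange A).mulVec v = σ₁ • u)
    (hmax : ∀ (x : Fin m₁ × Fin n₁ → ℝ) (y : Fin m₂ × Fin n₂ → ℝ),
      x ⬝ᵥ (rearrange A).mulVec y ≤
        σ₁ * Real.sqrt (∑ p, (x p) ^ 2) * Real.sqrt (∑ q, (y q) ^ 2))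
    (B : Matrix (Fin m₁) (Fin n₁) ℝ) (C : Matrix (Fin m₂) (Fin n₂) ℝ)
    (hB : ∀ i j, B i j = σ₁ * u (i, j)) (hC : ∀ k l, C k l = v (k, l)) :
    ∀ (B' : Matrix (Fin m₁) (Fin n₁) ℝ) (C' : Matrix (Fin m₂) (Fin n₂) ℝ),
      frobNorm (A - B ⊗ₖ C) ≤ frobNorm (A - B' ⊗ₖ C') := by
  intro B' C'
  have hvecB : Function.uncurry B = σ₁ • u := funext fun p => hB p.1 p.2
  have hvecC : Function.uncurry C = v := funext fun q => hC q.1 q.2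
  rw [frobNorm_sub_kronecker, frobNorm_sub_kronecker, hvecB, hvecC]
  exact frobNorm_sub_vecMulVec_le _ σ₁ u v hu hv hright hmax _ _

/-- If `σ₁` is the largest singular value of `𝓡(A)` with corresponding unit left and
right singular vectors `u`, `v`, then `B`, `C` defined by `vec(B) = σ₁ u` and
`vec(C) = v` minimize `‖A − B ⊗ C‖_F`. -/
theorem nearest_kronecker_product {m₁ m₂ n₁ n₂ : ℕ}
    (A : Matrix (Fin m₁ × Fin m₂) (Fin n₁ × Fin n₂) ℝ)
    (σ₁ : ℝ) (u : Fin m₁ × Fin n₁ → ℝ) (v : Fin m₂ × Fin n₂ → ℝ)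
    (hσ₁ : 0 ≤ σ₁)
    (hu : ∑ p, (u p) ^ 2 = 1) (hv : ∑ q, (v q) ^ 2 = 1)
    (hright : (rearrange A).mulVec v = σ₁ • u)
    (hleft : (rearrange A)ᵀ.mulVec u = σ₁ • v)
    (hmax : ∀ (x : Fin m₁ × Fin n₁ → ℝ) (y : Fin m₂ × Fin n₂ → ℝ),
      x ⬝ᵥ (rearrange A).mulVec y ≤
        σ₁ * Real.sqrt (∑ p, (x p) ^ 2) * Real.sqrt (∑ q, (y q) ^ 2))
    (B : Matrix (Fin m₁) (Fin n₁) ℝ) (C : Matrix (Fin m₂) (Fin n₂) ℝ)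
    (hB : ∀ i j, B i j = σ₁ * u (i, j)) (hC : ∀ k l, C k l = v (k, l)) :
    ∀ (B' : Matrix (Fin m₁) (Fin n₁) ℝ) (C' : Matrix (Fin m₂) (Fin n₂) ℝ),
      frobNorm (A - B ⊗ₖ C) ≤ frobNorm (A - B' ⊗ₖ C') :=
  nearest_kronecker_product_general A σ₁ u v hu hv hright hmax B C hB hC
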